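/- arXiv:1701.00624 — 7 statements merged into one kernel-verified Lean document; each statement's English description precedes it below -/
import Mathlib

section
/- If α and β are prenamings with C⁺(α) disjoint from C⁺(β) and R⁺(α) disjoint from R⁺(β), then their sum α⊎β is a prenaming, with relaxed core C⁺(α) ∪ C⁺(β) and relaxed range R⁺(α) ∪ R⁺(β). -/
/-- Sum of variable-pure substitutions with given relaxed cores. -/
def vsum (α β : ℕ → ℕ) (Cα Cβ : Finset ℕ) : ℕ → ℕ :=
  fun x => if x ∈ Cα then α x else if x ∈ Cβ then β x else x

/-- The sum of prenamings (with disjoint relaxed cores and disjoint relaxed ranges)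
is a prenaming with relaxed core Cα ∪ Cβ and relaxed range Rα ∪ Rβ. -/
theorem stmt6 (α β : ℕ → ℕ) (Cα Cβ : Finset ℕ)
    (hαdom : ∀ x, α x ≠ x → x ∈ Cα) (hαinj : Set.InjOn α ↑Cα)
    (hβdom : ∀ x, β x ≠ x → x ∈ Cβ) (hβinj : Set.InjOn β ↑Cβ)
    (hC : Disjoint Cα Cβ) (hR : Disjoint (Cα.image α) (Cβ.image β)) :
    (∀ x, vsum α β Cα Cβ x ≠ x → x ∈ Cα ∪ Cβ) ∧
    Set.InjOn (vsum α β Cα Cβ) ↑(Cα ∪ Cβ) ∧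
    (Cα ∪ Cβ).image (vsum α β Cα Cβ) = Cα.image α ∪ Cβ.image β := by
  have hv : ∀ x, (x ∈ Cα → vsum α β Cα Cβ x = α x) ∧ (x ∈ Cβ → vsum α β Cα Cβ x = β x) := by
    intro x
    constructor
    · intro hx; simp [vsum, hx]
    · intro hx
      have hxα : x ∉ Cα := fun h => (Finset.disjoint_left.mp hC h) hx
      simp [vsum, hxα, hx]
  refine ⟨?_, ?_, ?_⟩
  · intro x hx
    by_contra h
    simp only [Finset.mem_union, not_or] at h
    simp [vsum, h.1, h.2] at hx
  · intro x hx y hy hxy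
    simp only [Finset.coe_union, Set.mem_union, Finset.mem_coe] at hx hy
    rcases hx with hx | hx <;> rcases hy with hy | hy
    · exact hαinj hx hy (by rwa [(hv x).1 hx, (hv y).1 hy] at hxy)
    · rw [(hv x).1 hx, (hv y).2 hy] at hxy
      exact absurd (Finset.mem_image_of_mem β hy)
        (fun h => Finset.disjoint_right.mp hR h (hxy ▸ Finset.mem_image_of_mem α hx))
    · rw [(hv x).2 hx, (hv y).1 hy] at hxy
      exact absurd (hxy ▸ Finset.mem_image_of_mem β hx)
        (fun h => Finset.disjoint_right.mp hR h (Finset.mem_image_of_mem α hy))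
    · exact hβinj hx hy (by rwa [(hv x).2 hx, (hv y).2 hy] at hxy)
  · ext z
    simp only [Finset.mem_image, Finset.mem_union]
    constructor
    · rintro ⟨x, hx | hx, rfl⟩
      · exact Or.inl ⟨x, hx, ((hv x).1 hx).symm⟩
      · exact Or.inr ⟨x, hx, ((hv x).2 hx).symm⟩
    · rintro (⟨x, hx, rfl⟩ | ⟨x, hx, rfl⟩)
      · exact ⟨x, Or.inl hx, (hv x).1 hx⟩
      · exact ⟨x, Or.inr hx, (hv x).2 hx⟩
end

section
/- For any prenaming α there exists a renaming (bijective variable-pure substitution) ρ that coincides with α on V \ (R⁺(α) \ C⁺(α)), and satisfies vars(ρ) ⊆ C⁺(α) ∪ R⁺(α). Moreover, if α(x) ≠ x for all x ∈ C⁺(α), then ρ can be chosen with ρ(x) ≠ x for all x ∈ C⁺(α) ∪ R⁺(α). -/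
/-- Embedding theorem: every prenaming α extends to a relevant renaming (its closure)
coinciding with α outside R⁺(α) \ C⁺(α), with all its variables inside C⁺(α) ∪ R⁺(α);
moreover it can be chosen fixpoint-free on C⁺(α) ∪ R⁺(α) whenever α is fixpoint-free on C⁺(α). -/
theorem stmt7 (α : ℕ → ℕ) (C : Finset ℕ)
    (hdom : ∀ x, α x ≠ x → x ∈ C) (hinj : Set.InjOn α ↑C) :
    ∃ ρ : ℕ → ℕ, Function.Bijective ρ ∧ {x | ρ x ≠ x}.Finite ∧
      (∀ x, x ∉ C.image α \ C → ρ x = α x) ∧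
      ({x | ρ x ≠ x} ∪ ρ '' {x | ρ x ≠ x} ⊆ ↑(C ∪ C.image α)) ∧
      ((∀ x ∈ C, α x ≠ x) → ∀ x ∈ C ∪ C.image α, ρ x ≠ x) := by
  set D := C.image α \ C with hD
  set E := C \ C.image α with hEdef
  have hcard : D.card = E.card := by
    rw [hD, hEdef]
    exact Finset.card_sdiff_comm (Finset.card_image_of_injOn hinj)
  let e : D ≃ E := Finset.equivOfCardEq hcard
  set ρ : ℕ → ℕ := fun x => if h : x ∈ D then (e ⟨x, h⟩ : ℕ) else α x with hρ
  have hfix : ∀ x, x ∉ C → x ∉ C.image α → ρ x = x := by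
    intro x hC hI
    have hxD : x ∉ D := by simp [hD, hI]
    simp only [hρ, dif_neg hxD]
    by_contra h
    exact hC (hdom x h)
  have heE : ∀ (x : ℕ) (h : x ∈ D), ((e ⟨x, h⟩ : E) : ℕ) ∈ E := fun x h => (e ⟨x, h⟩).2
  -- values on D land in C \ image, values off D on C land in image
  have hval : ∀ x, x ∉ D → ρ x = α x := fun x h => by simp [hρ, dif_neg h]
  have hinjρ : Function.Injective ρ := by
    intro x y hxy
    by_cases hx : x ∈ D <;> by_cases hy : y ∈ D
    · simp only [hρ, dif_pos hx, dif_pos hy] at hxy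
      exact congrArg Subtype.val (e.injective (Subtype.ext hxy))
    · exfalso
      simp only [hρ, dif_pos hx, dif_neg hy] at hxy
      have hIn : ((e ⟨x, hx⟩ : E) : ℕ) ∈ E := heE x hx
      rw [hxy] at hIn
      rw [hEdef, Finset.mem_sdiff] at hIn
      by_cases hyC : y ∈ C
      · exact hIn.2 (Finset.mem_image_of_mem α hyC)
      · have : α y = y := by_contra fun h => hyC (hdom y h)
        rw [this] at hIn
        exact hyC hIn.1
    · exfalso
      simp only [hρ, dif_neg hx, dif_pos hy] at hxy
      have hIn : ((e ⟨y, hy⟩ : E) : ℕ) ∈ E := heE y hy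
      rw [← hxy] at hIn
      rw [hEdef, Finset.mem_sdiff] at hIn
      by_cases hxC : x ∈ C
      · exact hIn.2 (Finset.mem_image_of_mem α hxC)
      · have : α x = x := by_contra fun h => hxC (hdom x h)
        rw [this] at hIn
        exact hxC hIn.1
    · simp only [hρ, dif_neg hx, dif_neg hy] at hxy
      by_cases hxC : x ∈ C <;> by_cases hyC : y ∈ C
      · exact hinj hxC hyC hxy
      · exfalso
        have hyx : α y = y := by_contra fun h => hyC (hdom y h)
        have : y ∈ D := by
          rw [hD, Finset.mem_sdiff]
          exact ⟨(hxy.trans hyx) ▸ Finset.mem_image_of_mem α hxC, hyC⟩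
        exact hy this
      · exfalso
        have hxx : α x = x := by_contra fun h => hxC (hdom x h)
        have : x ∈ D := by
          rw [hD, Finset.mem_sdiff]
          exact ⟨(hxy.symm.trans hxx) ▸ Finset.mem_image_of_mem α hyC, hxC⟩
        exact hx this
      · have hxx : α x = x := by_contra fun h => hxC (hdom x h)
        have hyx : α y = y := by_contra fun h => hyC (hdom y h)
        rw [hxx, hyx] at hxy
        exact hxy
  have hsurj : Function.Surjective ρ := by
    intro y
    by_cases hyE : y ∈ E
    · refine ⟨(e.symm ⟨y, hyE⟩ : D), ?_⟩
      have hm : ((e.symm ⟨y, hyE⟩ : D) : ℕ) ∈ D := (e.symm ⟨y, hyE⟩).2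
      simp only [hρ, dif_pos hm]
      have : e ⟨((e.symm ⟨y, hyE⟩ : D) : ℕ), hm⟩ = e (e.symm ⟨y, hyE⟩) := by
        congr
      rw [this, e.apply_symm_apply]
    · by_cases hyI : y ∈ C.image α
      · obtain ⟨x, hxC, hxy⟩ := Finset.mem_image.mp hyI
        have hxD : x ∉ D := by
          rw [hD, Finset.mem_sdiff]
          exact fun h => h.2 hxC
        exact ⟨x, by rw [hval x hxD, hxy]⟩
      · have hyC : y ∉ C := fun h => hyE (Finset.mem_sdiff.mpr ⟨h, hyI⟩)
        exact ⟨y, hfix y hyC hyI⟩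
  have hsubset : {x | ρ x ≠ x} ⊆ ↑(C ∪ C.image α) := by
    intro x hx
    simp only [Set.mem_setOf_eq] at hx
    by_contra h
    simp only [Finset.coe_union, Set.mem_union, Finset.mem_coe, Finset.mem_union] at h
    push_neg at h
    exact hx (hfix x h.1 h.2)
  refine ⟨ρ, ⟨hinjρ, hsurj⟩, Set.Finite.subset (C ∪ C.image α).finite_toSet hsubset,
    fun x hx => hval x hx, ?_, ?_⟩
  · apply Set.union_subset hsubset
    rintro _ ⟨x, hx, rfl⟩
    have hxC := hsubset hx
    simp only [Finset.coe_union, Set.mem_union, Finset.mem_coe] at hxC ⊢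
    by_cases hxD : x ∈ D
    · left
      have := Finset.mem_sdiff.mp (heE x hxD)
      simpa [hρ, dif_pos hxD] using this.1
    · rw [hval x hxD]
      rcases hxC with h | h
      · exact Or.inr (Finset.mem_image_of_mem α h)
      · -- x ∈ image α, x ∉ D means x ∈ C, contradiction with hxD unless x ∈ C
        by_cases hxC' : x ∈ C
        · exact Or.inr (Finset.mem_image_of_mem α hxC')
        · exact absurd (Finset.mem_sdiff.mpr ⟨h, hxC'⟩) hxD
  · intro hfree x hx
    rw [Finset.mem_union] at hx
    by_cases hxD : x ∈ D
    · have := Finset.mem_sdiff.mp (heE x hxD)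
      have hxC : x ∉ C := (Finset.mem_sdiff.mp hxD).2
      simp only [hρ, dif_pos hxD]
      intro h
      exact hxC (h ▸ this.1)
    · rw [hval x hxD]
      rcases hx with h | h
      · exact hfree x h
      · by_cases hxC : x ∈ C
        · exact hfree x hxC
        · exact absurd (Finset.mem_sdiff.mpr ⟨h, hxC⟩) hxD
end

section
/- A prenaming α is injective on the co-finite set V \ (R⁺(α) \ C⁺(α)), and this is the largest subset of V containing C⁺(α) on which α is injective. -/
/-- A prenaming is injective on the co-finite set V \ (R⁺ \ C⁺), and this set is
the largest set containing C⁺ on which it is injective. -/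
theorem stmt8 (α : ℕ → ℕ) (C : Finset ℕ)
    (hdom : ∀ x, α x ≠ x → x ∈ C) (hinj : Set.InjOn α ↑C) :
    Set.InjOn α ((C.image α \ C : Finset ℕ) : Set ℕ)ᶜ ∧
    ∀ W : Set ℕ, ↑C ⊆ W → Set.InjOn α W →
      W ⊆ ((C.image α \ C : Finset ℕ) : Set ℕ)ᶜ := by
  have hfix : ∀ x, x ∉ C → α x = x := fun x hx => by
    by_contra h; exact hx (hdom x h)
  constructor
  · intro x hx y hy hxy
    simp only [Set.mem_compl_iff, Finset.coe_sdiff, Set.mem_diff, Finset.coe_image,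
      Set.mem_image, Finset.mem_coe, not_and, not_not] at hx hy
    by_cases hxC : x ∈ C
    · by_cases hyC : y ∈ C
      · exact hinj hxC hyC hxy
      · have := hfix y hyC
        exact absurd (hy ⟨x, hxC, (hxy.trans this)⟩) hyC
    · by_cases hyC : y ∈ C
      · have := hfix x hxC
        exact absurd (hx ⟨y, hyC, (hxy.symm.trans this)⟩) hxC
      · rw [← hfix x hxC, ← hfix y hyC]; exact hxy
  · intro W hCW hWinj w hw
    simp only [Set.mem_compl_iff, Finset.coe_sdiff, Set.mem_diff, Finset.coe_image,
      Set.mem_image, Finset.mem_coe, not_and, not_not]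
    rintro ⟨c, hc, hcw⟩
    by_contra hwC
    have hαw : α w = w := hfix w hwC
    have : c = w := hWinj (hCW hc) hw (hcw.trans hαw.symm)
    exact hwC (this ▸ hc)
end

section
/- For a prenaming α and a variable x in the injectivity domain of α, α(x) equals ᾱ(x), where ᾱ is the closure renaming of α (the relevant renaming embedding α constructed by closing the chains x, α(x), α²(x), ...). -/
/-- ρ is the closure renaming of the prenaming α with relaxed core C:
it is a renaming agreeing with α on C, closing each open chain at its endpoint
x ∈ R⁺ \ C⁺ by sending x back to the start z of the chain (αᵐ(z) = x with m maximal),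
and the identity outside C ∪ α(C). -/
def IsClosure (α : ℕ → ℕ) (C : Finset ℕ) (ρ : ℕ → ℕ) : Prop :=
  Function.Bijective ρ ∧
  (∀ x ∈ C, ρ x = α x) ∧
  (∀ x ∈ C.image α \ C, ρ x ∈ C ∧
    ∃ m, α^[m] (ρ x) = x ∧ ∀ k, ∀ z ∈ C, α^[k] z = x → k ≤ m) ∧
  (∀ x, x ∉ C ∪ C.image α → ρ x = x)

/-- On its injectivity domain, a prenaming coincides with its closure. -/
theorem stmt13 (α : ℕ → ℕ) (C : Finset ℕ)
    (hdom : ∀ x, α x ≠ x → x ∈ C) (hinj : Set.InjOn α ↑C)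
    (ρ : ℕ → ℕ) (hρ : IsClosure α C ρ)
    (x : ℕ) (hx : x ∉ C.image α \ C) : α x = ρ x := by
  obtain ⟨-, h2, -, h4⟩ := hρ
  by_cases hc : x ∈ C
  · exact (h2 x hc).symm
  · have hfix : α x = x := by
      by_contra h; exact hc (hdom x h)
    have : x ∉ C ∪ C.image α := by
      simp only [Finset.mem_union, not_or]
      refine ⟨hc, fun h => hx ?_⟩
      exact Finset.mem_sdiff.mpr ⟨h, hc⟩
    rw [h4 x this, hfix]
end

section
/- Let σ be a substitution and α a prenaming safe for σ (i.e., vars(σ) = Dom(σ) ∪ vars(σ(Dom(σ))) is contained in the injectivity domain of α). Then the set {α(x)/α(σ(x)) : x ∈ Dom(σ)} is a well-defined core representation of a substitution: the variables α(x) for x ∈ Dom(σ) are pairwise distinct, and α(x) ≠ α(σ(x)) for each x ∈ Dom(σ). -/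
inductive Tm : Type
  | var : ℕ → Tm
  | fn : ℕ → List Tm → Tm

namespace Tm

def map (σ : ℕ → ℕ) : Tm → Tm
  | var x => var (σ x)
  | fn f ts => fn f (ts.attach.map fun t => t.1.map σ)
decreasing_by simp_wf; have := List.sizeOf_lt_of_mem t.2; omega

def subst (σ : ℕ → Tm) : Tm → Tm
  | var x => σ x
  | fn f ts => fn f (ts.attach.map fun t => t.1.subst σ)
decreasing_by simp_wf; have := List.sizeOf_lt_of_mem t.2; omega

def vars : Tm → Finset ℕ
  | var x => {x}
  | fn _ ts => (ts.attach.map fun t => t.1.vars).foldr (· ∪ ·) ∅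
decreasing_by simp_wf; have := List.sizeOf_lt_of_mem t.2; omega

end Tm

/-- The active domain of a substitution. -/
def SDom (σ : ℕ → Tm) : Set ℕ := {x | σ x ≠ Tm.var x}

/-- The set of variables of a substitution: Dom(σ) ∪ vars(σ(Dom σ)). -/
def varsS (σ : ℕ → Tm) : Set ℕ := SDom σ ∪ ⋃ x ∈ SDom σ, ↑(σ x).vars

/-- Substitution variant is well defined: for a prenaming α safe for σ, the family
{α(x)/α(σ(x)) : x ∈ Dom σ} is a core representation of a substitution. -/
theorem stmt15 (σ : ℕ → Tm) (hfin : (SDom σ).Finite)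
    (α : ℕ → ℕ) (C : Finset ℕ)
    (hdom : ∀ x, α x ≠ x → x ∈ C) (hinj : Set.InjOn α ↑C)
    (hsafe : varsS σ ⊆ ((C.image α \ C : Finset ℕ) : Set ℕ)ᶜ) :
    Set.InjOn α (SDom σ) ∧ ∀ x ∈ SDom σ, Tm.var (α x) ≠ (σ x).map α := by
  -- α is injective on the "injectivity domain" indom = complement of α(C) \ C
  have key : ∀ x y : ℕ, x ∉ (C.image α \ C : Finset ℕ) → y ∉ (C.image α \ C : Finset ℕ) →
      α x = α y → x = y := by
    intro x y hx hy hxy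
    by_cases hxC : x ∈ C
    · by_cases hyC : y ∈ C
      · exact hinj hxC hyC hxy
      · have hyy : α y = y := by by_contra h; exact hyC (hdom y h)
        have : y ∈ C.image α := Finset.mem_image.mpr ⟨x, hxC, hxy.trans hyy⟩
        exact absurd (Finset.mem_sdiff.mpr ⟨this, hyC⟩) hy
    · have hxx : α x = x := by by_contra h; exact hxC (hdom x h)
      by_cases hyC : y ∈ C
      · have : x ∈ C.image α := Finset.mem_image.mpr ⟨y, hyC, hxy.symm ▸ hxx⟩
        exact absurd (Finset.mem_sdiff.mpr ⟨this, hxC⟩) hx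
      · have hyy : α y = y := by by_contra h; exact hyC (hdom y h)
        rw [← hxx, ← hyy]; exact hxy
  have hmem : ∀ x ∈ varsS σ, x ∉ (C.image α \ C : Finset ℕ) := by
    intro x hx
    have := hsafe hx
    simpa using this
  constructor
  · intro x hx y hy hxy
    exact key x y (hmem x (Or.inl hx)) (hmem y (Or.inl hy)) hxy
  · intro x hx heq
    cases h : σ x with
    | var y =>
      rw [h] at heq
      simp only [Tm.map] at heq
      have hαxy : α x = α y := by injection heq
      have hyv : y ∈ varsS σ := by
        refine Or.inr (Set.mem_iUnion.mpr ⟨x, Set.mem_iUnion.mpr ⟨hx, ?_⟩⟩)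
        rw [h]; simp [Tm.vars]
      have : x = y := key x y (hmem x (Or.inl hx)) (hmem y hyv) hαxy
      exact hx (by rw [h, this])
    | fn f ts =>
      rw [h] at heq
      simp [Tm.map] at heq
end

section
/- Let σ and θ be substitutions and α a prenaming safe for both σ and θ (vars(σ) ∪ vars(θ) contained in the injectivity domain of α). Then α(σ ∘ θ) = α(σ) ∘ α(θ), where α(·) denotes the substitution variant operation. -/
open Classical

/-- The substitution variant α(σ) with bindings α(x)/α(σ(x)) for x ∈ Dom σ. -/
noncomputable def variant (α : ℕ → ℕ) (σ : ℕ → Tm) : ℕ → Tm :=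
  fun y => if h : ∃ x, σ x ≠ Tm.var x ∧ α x = y then (σ h.choose).map α else Tm.var y

/-- Composition of substitutions: (σ ∘ θ)(x) = σ(θ(x)). -/
def scomp (σ θ : ℕ → Tm) : ℕ → Tm := fun x => (θ x).subst σ

/-
Off the set `α(C) \ C` a prenaming is injective, and safety puts every variable of `σ` and `θ`
inside this injectivity domain `T`. There the variant is literally conjugation by `α`: for
`z ∈ T`, `α(τ)(α z) = α(τ z)`, and `α(τ)` is the identity outside `α(T)`. Since renaming commutes
with substitution on terms whose variables lie in `T`, both sides agree at `α z` for `z ∈ T`,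
and both are the identity elsewhere.
-/

namespace Tm

lemma mem_vars_fn {x f : ℕ} {ts : List Tm} :
    x ∈ (fn f ts).vars ↔ ∃ t ∈ ts, x ∈ t.vars := by
  have mem_foldr : ∀ l : List (Finset ℕ), x ∈ l.foldr (· ∪ ·) ∅ ↔ ∃ s ∈ l, x ∈ s := by
    intro l; induction l with
    | nil => simp
    | cons s l ih => simp [ih]
  simp [vars, mem_foldr]

lemma map_subst_eq_subst_map (α : ℕ → ℕ) (σ V : ℕ → Tm) (t : Tm)
    (h : ∀ z ∈ t.vars, V (α z) = (σ z).map α) :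
    (t.map α).subst V = (t.subst σ).map α := by
  induction t using map.induct with
  | case1 x => simpa [map, subst, vars] using h
  | case2 f ts ih =>
    simp only [map, subst, List.attach_map_val, List.map_map, fn.injEq, true_and]
    refine List.map_congr_left fun t ht => ?_
    exact ih ⟨t, ht⟩ fun z hz => h z (mem_vars_fn.2 ⟨t, ht, hz⟩)

end Tm

lemma vars_apply_subset_insert_varsS (θ : ℕ → Tm) (z : ℕ) :
    ↑(θ z).vars ⊆ insert z (varsS θ) := by
  by_cases hz : z ∈ SDom θ
  · exact fun y hy => Or.inr (Or.inr (Set.mem_biUnion hz hy))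
  · simp only [SDom, Set.mem_ofPred_eq, not_not] at hz
    simp [hz, Tm.vars]

lemma SDom_scomp_subset (σ θ : ℕ → Tm) : SDom (scomp σ θ) ⊆ SDom σ ∪ SDom θ := by
  intro x hx
  by_contra hnot
  simp only [SDom, Set.mem_union, Set.mem_ofPred_eq, not_or, not_not] at hnot
  exact hx (by rw [scomp, hnot.2, Tm.subst, hnot.1])

lemma injOn_compl_image_sdiff {α : ℕ → ℕ} {C : Finset ℕ} (hdom : ∀ x, α x ≠ x → x ∈ C)
    (hinj : Set.InjOn α ↑C) : Set.InjOn α ((C.image α \ C : Finset ℕ) : Set ℕ)ᶜ := by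
  have hfix : ∀ a, a ∉ C → α a = a := fun a ha => not_not.1 (mt (hdom a) ha)
  have mixed : ∀ a b, a ∈ C → b ∉ C → α a = α b → α b ∈ C.image α \ C := fun a b ha hb hab => by
    rw [hfix b hb] at hab ⊢
    exact Finset.mem_sdiff.2 ⟨Finset.mem_image.2 ⟨a, ha, hab⟩, hb⟩
  intro a ha b hb hab
  by_cases haC : a ∈ C <;> by_cases hbC : b ∈ C
  · exact hinj haC hbC hab
  · exact absurd (mixed a b haC hbC hab) (by simpa [hfix b hbC] using hb)
  · exact absurd (mixed b a hbC haC hab.symm) (by simpa [hfix a haC] using ha)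
  · rwa [hfix a haC, hfix b hbC] at hab

section variant

variable {α : ℕ → ℕ} {τ : ℕ → Tm} {T : Set ℕ}

lemma variant_apply_image (hinj : Set.InjOn α T) (hτ : SDom τ ⊆ T) {z : ℕ} (hz : z ∈ T) :
    variant α τ (α z) = (τ z).map α := by
  by_cases h : ∃ x, τ x ≠ Tm.var x ∧ α x = α z
  · rw [variant, dif_pos h, hinj (hτ h.choose_spec.1) hz h.choose_spec.2]
  · have hz' : τ z = Tm.var z := not_not.1 fun hne => h ⟨z, hne, rfl⟩
    rw [variant, dif_neg h, hz', Tm.map]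

lemma variant_apply_of_notMem_image (hτ : SDom τ ⊆ T) {y : ℕ} (hy : y ∉ α '' T) :
    variant α τ y = Tm.var y := by
  have h : ¬∃ x, τ x ≠ Tm.var x ∧ α x = y := fun ⟨x, hx, hxy⟩ => hy ⟨x, hτ hx, hxy⟩
  rw [variant, dif_neg h]

end variant

theorem stmt18_general (σ θ : ℕ → Tm)
    (α : ℕ → ℕ) (C : Finset ℕ)
    (hdom : ∀ x, α x ≠ x → x ∈ C) (hinj : Set.InjOn α ↑C)
    (hsafe : varsS σ ∪ varsS θ ⊆ ((C.image α \ C : Finset ℕ) : Set ℕ)ᶜ) :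
    ∀ x : ℕ, variant α (scomp σ θ) x = (variant α θ x).subst (variant α σ) := by
  set T : Set ℕ := ((C.image α \ C : Finset ℕ) : Set ℕ)ᶜ
  have hinjT : Set.InjOn α T := injOn_compl_image_sdiff hdom hinj
  have hσ : varsS σ ⊆ T := fun x hx => hsafe (Or.inl hx)
  have hθ : varsS θ ⊆ T := fun x hx => hsafe (Or.inr hx)
  have hσdom : SDom σ ⊆ T := fun x hx => hσ (Or.inl hx)
  have hθdom : SDom θ ⊆ T := fun x hx => hθ (Or.inl hx)
  have hcomp : SDom (scomp σ θ) ⊆ T :=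
    (SDom_scomp_subset σ θ).trans (Set.union_subset hσdom hθdom)
  intro y
  by_cases hy : y ∈ α '' T
  · obtain ⟨z, hz, rfl⟩ := hy
    have hvars : ∀ w ∈ (θ z).vars, w ∈ T := fun w hw =>
      Set.insert_subset hz hθ (vars_apply_subset_insert_varsS θ z hw)
    rw [variant_apply_image hinjT hcomp hz, variant_apply_image hinjT hθdom hz,
      Tm.map_subst_eq_subst_map α σ _ _ fun w hw => variant_apply_image hinjT hσdom (hvars w hw)]
    rfl
  · rw [variant_apply_of_notMem_image hcomp hy, variant_apply_of_notMem_image hθdom hy, Tm.subst,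
      variant_apply_of_notMem_image hσdom hy]

/-- Compositionality of substitution variant: α(σ ∘ θ) = α(σ) ∘ α(θ). -/
theorem stmt18 (σ θ : ℕ → Tm) (hσfin : (SDom σ).Finite) (hθfin : (SDom θ).Finite)
    (α : ℕ → ℕ) (C : Finset ℕ)
    (hdom : ∀ x, α x ≠ x → x ∈ C) (hinj : Set.InjOn α ↑C)
    (hsafe : varsS σ ∪ varsS θ ⊆ ((C.image α \ C : Finset ℕ) : Set ℕ)ᶜ) :
    ∀ x : ℕ, variant α (scomp σ θ) x = (variant α θ x).subst (variant α σ) :=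
  stmt18_general σ θ α C hdom hinj hsafe
end

section
/- Let ρ be a renaming and E a unification problem (pair of terms). Then the set of most general unifiers satisfies mgus(ρ(E)) = {ρ(σ) : σ ∈ mgus(E)}, where ρ(σ) = ρ ∘ σ ∘ ρ⁻¹ is the substitution variant. -/
/-- θ unifies s and t. -/
def IsUnifier (θ : ℕ → Tm) (s t : Tm) : Prop := s.subst θ = t.subst θ

/-- σ is a most general unifier of s and t. -/
def IsMGU (σ : ℕ → Tm) (s t : Tm) : Prop :=
  IsUnifier σ s t ∧ ∀ θ : ℕ → Tm, IsUnifier θ s t → ∃ δ : ℕ → Tm, ∀ x, θ x = (σ x).subst δ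

namespace Tm

theorem subst_fn (σ : ℕ → Tm) (f : ℕ) (ts : List Tm) :
    (fn f ts).subst σ = fn f (ts.map (·.subst σ)) := by
  rw [subst]; simp only [List.map_subtype, List.unattach_attach]

theorem map_fn (ρ : ℕ → ℕ) (f : ℕ) (ts : List Tm) :
    (fn f ts).map ρ = fn f (ts.map (·.map ρ)) := by
  rw [map]; simp only [List.map_subtype, List.unattach_attach]

theorem map_eq_subst (ρ : ℕ → ℕ) : ∀ t : Tm, t.map ρ = t.subst (fun x => var (ρ x))
  | var x => by rw [map, subst]
  | fn f ts => by
    rw [map_fn, subst_fn]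
    exact congrArg (fn f) (List.map_congr_left fun u _ => map_eq_subst ρ u)

theorem subst_var : ∀ t : Tm, t.subst var = t
  | var x => by rw [subst]
  | fn f ts => by
    rw [subst_fn]
    exact congrArg (fn f) (List.map_congr_left (fun u _ => subst_var u) |>.trans ts.map_id)

theorem subst_subst (δ σ : ℕ → Tm) :
    ∀ t : Tm, (t.subst σ).subst δ = t.subst (fun x => (σ x).subst δ)
  | var x => by simp only [subst]
  | fn f ts => by
    rw [subst_fn, subst_fn, subst_fn, List.map_map]
    exact congrArg (fn f) (List.map_congr_left fun u _ => subst_subst δ σ u)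

theorem map_symm_map (e : ℕ ≃ ℕ) (t : Tm) : (t.map e).map e.symm = t := by
  simp [map_eq_subst, subst_subst, subst, subst_var]

theorem map_injective (e : ℕ ≃ ℕ) : Function.Injective (map e) :=
  Function.LeftInverse.injective (map_symm_map e)

/-- The substitution variant `ρ(σ) = ρ ∘ σ ∘ ρ⁻¹`. -/
def renameSubst (e : ℕ ≃ ℕ) : (ℕ → Tm) ≃ (ℕ → Tm) where
  toFun σ x := (σ (e.symm x)).map e
  invFun σ x := (σ (e x)).map e.symm
  left_inv σ := funext fun x => by simp [map_symm_map]
  right_inv σ := funext fun x => by simpa using map_symm_map e.symm (σ x)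

theorem map_subst_renameSubst (e : ℕ ≃ ℕ) (σ : ℕ → Tm) (t : Tm) :
    (t.map e).subst (renameSubst e σ) = (t.subst σ).map e := by
  simp [renameSubst, map_eq_subst, subst_subst, subst]

theorem renameSubst_comp (e : ℕ ≃ ℕ) (σ δ : ℕ → Tm) :
    renameSubst e (fun x => (σ x).subst δ) =
      fun x => (renameSubst e σ x).subst (renameSubst e δ) :=
  funext fun _ => (map_subst_renameSubst e δ _).symm

end Tm

open Tm

theorem isUnifier_renameSubst_iff (e : ℕ ≃ ℕ) (σ : ℕ → Tm) (s t : Tm) :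
    IsUnifier (renameSubst e σ) (s.map e) (t.map e) ↔ IsUnifier σ s t := by
  rw [IsUnifier, IsUnifier, map_subst_renameSubst, map_subst_renameSubst]
  exact (map_injective e).eq_iff

theorem exists_renameSubst_iff (e : ℕ ≃ ℕ) (σ θ : ℕ → Tm) :
    (∃ δ, ∀ x, renameSubst e θ x = (renameSubst e σ x).subst δ) ↔
      ∃ δ, ∀ x, θ x = (σ x).subst δ := by
  simp only [← funext_iff]
  refine ((renameSubst e).exists_congr fun δ => ?_).symm
  rw [← renameSubst_comp, (renameSubst e).apply_eq_iff_eq]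

theorem isMGU_renameSubst_iff (e : ℕ ≃ ℕ) (σ : ℕ → Tm) (s t : Tm) :
    IsMGU (renameSubst e σ) (s.map e) (t.map e) ↔ IsMGU σ s t := by
  refine and_congr (isUnifier_renameSubst_iff e σ s t)
    ((renameSubst e).forall_congr fun θ => ?_).symm
  rw [isUnifier_renameSubst_iff, exists_renameSubst_iff]

theorem stmt19_general (ρ ρi : ℕ → ℕ)
    (hli : Function.LeftInverse ρi ρ) (hri : Function.RightInverse ρi ρ)
    (s t : Tm) :
    {σ' : ℕ → Tm | IsMGU σ' (s.map ρ) (t.map ρ)} =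
      (fun σ : ℕ → Tm => fun x => (σ (ρi x)).map ρ) '' {σ : ℕ → Tm | IsMGU σ s t} := by
  let e : ℕ ≃ ℕ := ⟨ρ, ρi, hli, hri⟩
  change _ = renameSubst e '' _
  rw [Equiv.image_eq_preimage_symm]
  ext σ'
  have h := isMGU_renameSubst_iff e ((renameSubst e).symm σ') s t
  rw [Equiv.apply_symm_apply] at h
  exact h

/-- Renaming compatibility of mgus: mgus(ρ(E)) = { ρ∘σ∘ρ⁻¹ : σ ∈ mgus(E) }. -/
theorem stmt19 (ρ ρi : ℕ → ℕ) (hfin : {x | ρ x ≠ x}.Finite)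
    (hli : Function.LeftInverse ρi ρ) (hri : Function.RightInverse ρi ρ)
    (s t : Tm) :
    {σ' : ℕ → Tm | IsMGU σ' (s.map ρ) (t.map ρ)} =
      (fun σ : ℕ → Tm => fun x => (σ (ρi x)).map ρ) '' {σ : ℕ → Tm | IsMGU σ s t} :=
  stmt19_general ρ ρi hli hri s t
end
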